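/- The SPARQL minus operation violates the set-theoretic axioms A \ (A ∩ B) = A \ B and (A ∪ B) \ B = A \ B. Concretely, writing μ0 for the empty mapping: (g) if Ω is a nonempty finite multiset of solution mappings all of whose elements have nonempty domain, then Ω − (Ω ⋈ {μ0}) = ∅ whereas Ω − {μ0} = Ω; and (j) for every finite multiset Ω of solution mappings, (Ω ∪ {μ0}) − {μ0} = Ω ∪ {μ0} whereas Ω − {μ0} = Ω, where ∪ is the multiset sum. -/
import Mathlib


open scoped Classical

noncomputable section

/-- A solution mapping: a finite partial function from variables to terms. -/
abbrev SMap (V T : Type) := Finmap (fun _ : V => T)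

variable {V T : Type} [DecidableEq V] [DecidableEq T]

/-- Two solution mappings are compatible if they agree on the
intersection of their domains. -/
def Compat (μ1 μ2 : SMap V T) : Prop :=
  ∀ x ∈ μ1, x ∈ μ2 → μ1.lookup x = μ2.lookup x

/-- Join of two multisets of solution mappings: unions of compatible pairs,
multiplicities multiply and add over all decompositions. -/
def mjoin (Ω1 Ω2 : Multiset (SMap V T)) : Multiset (SMap V T) :=
  Ω1.bind fun μ1 => (Ω2.filter fun μ2 => Compat μ1 μ2).map fun μ2 => μ1 ∪ μ2

/-- Simple difference: keep (with multiplicity) the mappings of `Ω1`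
incompatible with every element of `Ω2`. -/
def msdiff (Ω1 Ω2 : Multiset (SMap V T)) : Multiset (SMap V T) :=
  Ω1.filter fun μ1 => ∀ μ2 ∈ Ω2, ¬ Compat μ1 μ2

/-- SPARQL minus: keep (with multiplicity) the mappings of `Ω1` such that every
element of `Ω2` is incompatible with it or has disjoint domain. -/
def sminus (Ω1 Ω2 : Multiset (SMap V T)) : Multiset (SMap V T) :=
  Ω1.filter fun μ1 => ∀ μ2 ∈ Ω2, ¬ Compat μ1 μ2 ∨ μ1.keys ∩ μ2.keys = ∅

/-- Domain of a multiset of mappings: the union of the domains of its elements. -/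
def mdom (Ω : Multiset (SMap V T)) : Finset V := (Ω.map Finmap.keys).sup

/-- A multiset of mappings is domain-uniform when all its elements have the
same domain. -/
def DomUniform (Ω : Multiset (SMap V T)) : Prop :=
  ∀ μ1 ∈ Ω, ∀ μ2 ∈ Ω, Finmap.keys μ1 = Finmap.keys μ2

/-- Three truth values: true, false, error. -/
inductive TV where | t | f | e
deriving DecidableEq

/-- Strong Kleene conjunction. -/
def TV.andTV : TV → TV → TV
  | .t, q => q
  | .f, _ => .f
  | .e, .t => .e
  | .e, .f => .f
  | .e, .e => .e

/-- Strong Kleene disjunction. -/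
def TV.orTV : TV → TV → TV
  | .t, _ => .t
  | .f, q => q
  | .e, .t => .t
  | .e, .f => .e
  | .e, .e => .e

/-- Three-valued negation. -/
def TV.notTV : TV → TV
  | .t => .f
  | .f => .t
  | .e => .e

/-- Selection formulas, built from atoms `x = c`, `x = y` and `bound x`. -/
inductive SForm (V T : Type) where
  | eqc : V → T → SForm V T
  | eqv : V → V → SForm V T
  | bound : V → SForm V T
  | fand : SForm V T → SForm V T → SForm V T
  | for' : SForm V T → SForm V T → SForm V T
  | fnot : SForm V T → SForm V T

/-- Three-valued evaluation of a selection formula on a solution mapping. -/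
def evalF (μ : SMap V T) : SForm V T → TV
  | .eqc x c =>
    match μ.lookup x with
    | some a => if a = c then .t else .f
    | none => .e
  | .eqv x y =>
    match μ.lookup x, μ.lookup y with
    | some a, some b => if a = b then .t else .f
    | some _, none => .e
    | none, _ => .e
  | .bound x => if x ∈ μ then .t else .f
  | .fand F1 F2 => (evalF μ F1).andTV (evalF μ F2)
  | .for' F1 F2 => (evalF μ F1).orTV (evalF μ F2)
  | .fnot F1 => (evalF μ F1).notTV

/-- Selection: keep (with multiplicity) the mappings evaluating `F` to true. -/
def sel (F : SForm V T) (Ω : Multiset (SMap V T)) : Multiset (SMap V T) :=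
  Ω.filter fun μ => evalF μ F = .t

/-- W3C difference: keep (with multiplicity) the mappings `μ1` of `Ω1` such that
every `μ2 ∈ Ω2` is incompatible with `μ1`, or compatible with
`(μ1 ∪ μ2)(F) = false`. -/
def wdiff (F : SForm V T) (Ω1 Ω2 : Multiset (SMap V T)) : Multiset (SMap V T) :=
  Ω1.filter fun μ1 => ∀ μ2 ∈ Ω2,
    ¬ Compat μ1 μ2 ∨ (Compat μ1 μ2 ∧ evalF (μ1 ∪ μ2) F = .f)

end

lemma sminus_empty' {V T : Type} [DecidableEq V] [DecidableEq T]
    (Ω : Multiset (SMap V T)) : sminus Ω {(∅ : SMap V T)} = Ω := by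
  apply Multiset.filter_eq_self.2
  intro μ _ μ2 hμ2
  rw [Multiset.mem_singleton] at hμ2
  subst hμ2
  right
  simp [Finmap.keys_empty]

lemma mjoin_empty' {V T : Type} [DecidableEq V] [DecidableEq T]
    (Ω : Multiset (SMap V T)) : mjoin Ω {(∅ : SMap V T)} = Ω := by
  unfold mjoin
  have h : ∀ μ1 : SMap V T,
      ((({(∅ : SMap V T)} : Multiset (SMap V T)).filter fun μ2 => Compat μ1 μ2).map
        fun μ2 => μ1 ∪ μ2) = {μ1} := by
    intro μ1
    have hc : Compat μ1 (∅ : SMap V T) := by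
      intro x _ hx
      exact absurd hx Finmap.notMem_empty
    rw [Multiset.filter_singleton, if_pos hc, Multiset.map_singleton,
      Finmap.union_empty]
  rw [Multiset.bind_congr (fun μ1 _ => h μ1)]
  rw [Multiset.bind_singleton, Multiset.map_id']

/-- the SPARQL minus violates `A \ (A ∩ B) = A \ B` and
`(A ∪ B) \ B = A \ B`: with `μ0` the empty mapping, (g) for nonempty `Ω`
whose mappings all have nonempty domain, `Ω − (Ω ⋈ {μ0}) = ∅` whereas
`Ω − {μ0} = Ω`; and (j) for every `Ω`, `(Ω ∪ {μ0}) − {μ0} = Ω ∪ {μ0}`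
whereas `Ω − {μ0} = Ω`. -/
theorem stmt_19 {V T : Type} [DecidableEq V] [DecidableEq T] :
    (∀ Ω : Multiset (SMap V T), Ω ≠ 0 → (∀ μ ∈ Ω, Finmap.keys μ ≠ ∅) →
      sminus Ω (mjoin Ω {(∅ : SMap V T)}) = 0 ∧ sminus Ω {(∅ : SMap V T)} = Ω) ∧
    ∀ Ω : Multiset (SMap V T),
      sminus (Ω + {(∅ : SMap V T)}) {(∅ : SMap V T)} = Ω + {(∅ : SMap V T)} ∧
        sminus Ω {(∅ : SMap V T)} = Ω := by
  constructor
  · intro Ω _ hdom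
    refine ⟨?_, sminus_empty' Ω⟩
    rw [mjoin_empty']
    unfold sminus
    rw [Multiset.filter_eq_nil]
    intro μ1 h1 h
    have := h μ1 h1
    rcases this with hc | hk
    · exact hc (fun x _ _ => rfl)
    · exact hdom μ1 h1 (by simpa using hk)
  · intro Ω
    refine ⟨?_, sminus_empty' Ω⟩
    exact sminus_empty' _
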